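/- arXiv:2501.16960 — 2 statements merged into one kernel-verified Lean document; each statement's English description precedes it below -/
import Mathlib

section
/- If G is a connected non-complete block graph of order n ≥ 2, then the Δ-convex cover number φ_c(G) equals 2. -/
/-!
Pick an induced path `a - c - b` (it exists on any walk between two non-adjacent vertices) and let
`A` be the set of vertices reachable from `a` without passing through `c`. If `b` were in `A`,
a path from `a` to `b` avoiding `c`, closed up through `c`, would be a cycle; its vertex set is
biconnected, hence lies in a block, which is complete, so `a` and `b` would be adjacent. Thus
`b ∉ A`. Since `A` is closed under adjacency away from `c`, a triangle with two vertices in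
`A ∪ {c}` (resp. `Aᶜ`) and the third outside would have two vertices equal to `c`, so both sets
are Δ-convex; they cover `V`, and `a`, `b` show that neither contains the other.
-/

variable {V : Type*}

/-- A set `S` is Δ-convex: no vertex outside `S` is adjacent to two adjacent vertices of `S`. -/
def DeltaConvex (G : SimpleGraph V) (S : Set V) : Prop :=
  ∀ ⦃u v w : V⦄, u ∈ S → v ∈ S → G.Adj u v → G.Adj w u → G.Adj w v → w ∈ S

/-- The Δ-convex hull of `S`: the smallest Δ-convex set containing `S`. -/
def DeltaHull (G : SimpleGraph V) (S : Set V) : Set V :=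
  ⋂₀ {T | DeltaConvex G T ∧ S ⊆ T}

/-- A Δ-convex `p`-cover. -/
def IsDeltaCover (G : SimpleGraph V) {p : ℕ} (F : Fin p → Set V) : Prop :=
  (∀ i, DeltaConvex G (F i)) ∧ (⋃ i, F i) = Set.univ ∧
    ∀ i, ¬ F i ⊆ ⋃ j ∈ ({i}ᶜ : Set (Fin p)), F j

/-- A Δ-convex `p`-partition. -/
def IsDeltaPartition (G : SimpleGraph V) {p : ℕ} (F : Fin p → Set V) : Prop :=
  (∀ i, DeltaConvex G (F i)) ∧ (⋃ i, F i) = Set.univ ∧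
    (∀ i, (F i).Nonempty) ∧ ∀ i j, i ≠ j → Disjoint (F i) (F j)

/-- The Δ-convex cover number `φ_c(G)`. -/
noncomputable def coverNumber (G : SimpleGraph V) : ℕ :=
  sInf {p | 2 ≤ p ∧ ∃ F : Fin p → Set V, IsDeltaCover G F}

/-- The Δ-convex partition number `Θ_c(G)`. -/
noncomputable def partitionNumber (G : SimpleGraph V) : ℕ :=
  sInf {p | 2 ≤ p ∧ ∃ F : Fin p → Set V, IsDeltaPartition G F}

/-- A vertex is Δ-extreme iff it lies in no triangle (this characterization is used directly). -/
def DeltaExtreme (G : SimpleGraph V) (u : V) : Prop :=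
  ∀ v w : V, ¬ (G.Adj u v ∧ G.Adj u w ∧ G.Adj v w)

/-- `B` induces a maximal 2-connected (or edge) subgraph candidate: `B` has at least two
vertices, induces a connected subgraph, and removing any single vertex keeps it connected. -/
def IsBiconnectedSet (G : SimpleGraph V) (B : Set V) : Prop :=
  2 ≤ B.ncard ∧ (G.induce B).Connected ∧
    ∀ v ∈ B, (G.induce (B \ {v})).Connected

/-- A block of `G`: a maximal biconnected set. -/
def IsBlock (G : SimpleGraph V) (B : Set V) : Prop :=
  IsBiconnectedSet G B ∧ ∀ B' : Set V, IsBiconnectedSet G B' → B ⊆ B' → B = B'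

open SimpleGraph

section

variable {G : SimpleGraph V}

lemma exists_isBlock_superset [Finite V] {S : Set V} (hS : IsBiconnectedSet G S) :
    ∃ B, IsBlock G B ∧ S ⊆ B := by
  obtain ⟨B, hSB, hB⟩ := Finite.exists_le_maximal hS
  exact ⟨B, ⟨hB.prop, fun B' hB' hBB' => hBB'.antisymm (hB.2 hB' hBB')⟩, hSB⟩

namespace SimpleGraph.Walk

lemma exists_adj_adj_not_adj {u v : V} (w : G.Walk u v) (hne : u ≠ v) (huv : ¬G.Adj u v) :
    ∃ x y z, G.Adj x y ∧ G.Adj y z ∧ ¬G.Adj x z ∧ x ≠ z := by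
  induction w with
  | nil => exact absurd rfl hne
  | @cons u x v hux w ih =>
    by_cases hxv : G.Adj x v
    · exact ⟨u, x, v, hux, hxv, huv, hne⟩
    · exact ih (by rintro rfl; exact huv hux) hxv

lemma IsCycle.connected_induce_support_diff_singleton {u v : V} {C : G.Walk u u}
    (hC : C.IsCycle) (hv : v ∈ C.support) :
    (G.induce ({x | x ∈ C.support} \ {v})).Connected := by
  classical
  -- Rotated to start at `v`, the cycle's tail is a path ending at `v`; reversing it and dropping
  -- its first vertex leaves a path through exactly the other vertices of the cycle.
  set D := C.rotate v hv
  have hD : D.IsCycle := hC.rotate hv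
  have hDt : ¬D.tail.reverse.Nil := by
    rw [← length_eq_zero_iff, length_reverse, length_tail]
    have := hD.three_le_length
    omega
  have hcons : v :: D.tail.reverse.tail.support = D.tail.reverse.support := cons_support_tail hDt
  have hnodup := hcons ▸ hD.isPath_tail.reverse.support_nodup
  have hmem : ∀ x, x ∈ D.tail.support ↔ x ∈ C.support := by
    intro x
    rw [← mem_support_rotate_iff C v hv, ← cons_support_tail hD.not_nil, List.mem_cons]
    exact ⟨Or.inr, fun h => h.elim (· ▸ D.tail.end_mem_support) id⟩
  have hset : {x | x ∈ C.support} \ {v} = {x | x ∈ D.tail.reverse.tail.support} := by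
    ext x
    have := List.mem_cons (a := x) (b := v) (l := D.tail.reverse.tail.support)
    rw [hcons, support_reverse, List.mem_reverse, hmem] at this
    simp only [Set.mem_sdiff, Set.mem_ofPred_eq, Set.mem_singleton_iff, this]
    grind [List.nodup_cons]
  rw [hset]
  exact D.tail.reverse.tail.connected_induce_support

lemma IsCycle.isBiconnectedSet {u : V} {C : G.Walk u u} (hC : C.IsCycle) :
    IsBiconnectedSet G {x | x ∈ C.support} := by
  refine ⟨?_, C.connected_induce_support, fun v hv => hC.connected_induce_support_diff_singleton hv⟩
  have hpair : ({u, C.snd} : Set V) ⊆ {x | x ∈ C.support} := by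
    simp [Set.insert_subset_iff, C.getVert_mem_support 1]
  calc 2 = ({u, C.snd} : Set V).ncard := (Set.ncard_pair (C.adj_snd hC.not_nil).ne).symm
    _ ≤ _ := Set.ncard_le_ncard hpair C.support.finite_toSet

lemma IsCycle.adj_of_isBlock_complete [Finite V]
    (hblock : ∀ B : Set V, IsBlock G B → ∀ u ∈ B, ∀ v ∈ B, u ≠ v → G.Adj u v)
    {u x y : V} {C : G.Walk u u} (hC : C.IsCycle) (hx : x ∈ C.support) (hy : y ∈ C.support)
    (hxy : x ≠ y) : G.Adj x y := by
  obtain ⟨B, hB, hCB⟩ := exists_isBlock_superset hC.isBiconnectedSet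
  exact hblock B hB x (hCB hx) y (hCB hy) hxy

end SimpleGraph.Walk

lemma adj_of_walk_notMem_support [Finite V]
    (hblock : ∀ B : Set V, IsBlock G B → ∀ u ∈ B, ∀ v ∈ B, u ≠ v → G.Adj u v)
    {a b c : V} (hac : G.Adj a c) (hcb : G.Adj c b) (hab : a ≠ b)
    (w : G.Walk a b) (hcw : c ∉ w.support) : G.Adj a b := by
  classical
  have hcp : c ∉ w.bypass.reverse.support := by
    rw [Walk.support_reverse, List.mem_reverse]
    exact fun h => hcw (w.support_bypass_subset_support h)
  have hC : (Walk.cons hac (Walk.cons hcb w.bypass.reverse)).IsCycle := by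
    refine (Walk.cons_isCycle_iff _ _).2 ⟨w.bypass_isPath.reverse.cons hcp, ?_⟩
    rw [Walk.edges_cons, List.mem_cons, Sym2.eq_iff]
    rintro ((⟨rfl, -⟩ | ⟨rfl, -⟩) | h)
    · exact hac.ne rfl
    · exact hab rfl
    · exact hcp (Walk.snd_mem_support_of_mem_edges _ h)
  exact hC.adj_of_isBlock_complete hblock (Walk.start_mem_support _) (by simp) hab

section CutVertex

variable {A : Set V} {c : V}

lemma deltaConvex_insert_of_forall_adj
    (hA : ∀ ⦃x y⦄, x ∈ A → G.Adj x y → y ≠ c → y ∈ A) : DeltaConvex G (insert c A) := by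
  intro u v w hu hv huv hwu hwv
  by_cases hwc : w = c
  · exact Or.inl hwc
  refine Or.inr ?_
  rcases hu with rfl | hu
  · exact hA (hv.resolve_left huv.ne') hwv.symm hwc
  · exact hA hu hwu.symm hwc

lemma deltaConvex_compl_of_forall_adj
    (hA : ∀ ⦃x y⦄, x ∈ A → G.Adj x y → y ≠ c → y ∈ A) : DeltaConvex G Aᶜ := by
  intro u v w hu hv huv hwu hwv
  by_contra hw
  have hu' : u = c := by_contra fun h => hu (hA (not_not.1 hw) hwu h)
  have hv' : v = c := by_contra fun h => hv (hA (not_not.1 hw) hwv h)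
  exact huv.ne (hu'.trans hv'.symm)

end CutVertex

lemma coverNumber_eq_two_of_deltaConvex {S T : Set V} (hS : DeltaConvex G S)
    (hT : DeltaConvex G T) (hST : S ∪ T = Set.univ) (hS_T : ¬S ⊆ T) (hT_S : ¬T ⊆ S) :
    coverNumber G = 2 := by
  have hcover : IsDeltaCover G ![S, T] := by
    refine ⟨Fin.forall_fin_two.2 ⟨hS, hT⟩, ?_, Fin.forall_fin_two.2 ⟨?_, ?_⟩⟩
    · simpa [Set.ext_iff, Fin.exists_fin_two] using hST
    · simpa [Set.subset_def] using hS_T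
    · simpa [Set.subset_def] using hT_S
  have h2 : 2 ∈ {p | 2 ≤ p ∧ ∃ F : Fin p → Set V, IsDeltaCover G F} := ⟨le_rfl, _, hcover⟩
  exact le_antisymm (Nat.sInf_le h2) (le_csInf ⟨2, h2⟩ fun p hp => hp.1)

lemma coverNumber_eq_two_of_adj_adj_not_adj [Finite V]
    (hblock : ∀ B : Set V, IsBlock G B → ∀ u ∈ B, ∀ v ∈ B, u ≠ v → G.Adj u v)
    {a b c : V} (hac : G.Adj a c) (hcb : G.Adj c b) (hab : ¬G.Adj a b) (hne : a ≠ b) :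
    coverNumber G = 2 := by
  set A : Set V := {x | ∃ w : G.Walk a x, c ∉ w.support}
  have hA : ∀ ⦃x y⦄, x ∈ A → G.Adj x y → y ≠ c → y ∈ A := by
    rintro x y ⟨w, hw⟩ hxy hyc
    exact ⟨w.concat hxy, by simp [Walk.support_concat, hw, hyc.symm]⟩
  have haA : a ∈ A := ⟨Walk.nil, by simpa using hac.ne'⟩
  have hbA : b ∉ A := fun ⟨w, hw⟩ => hab (adj_of_walk_notMem_support hblock hac hcb hne w hw)
  refine coverNumber_eq_two_of_deltaConvex (deltaConvex_insert_of_forall_adj hA)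
    (deltaConvex_compl_of_forall_adj hA) ?_ ?_ ?_
  · exact Set.eq_univ_of_forall fun x => (em (x ∈ A)).imp (Set.mem_insert_of_mem c) id
  · exact fun h => h (Set.mem_insert_of_mem c haA) haA
  · exact fun h => (h hbA).elim hcb.ne' hbA

end

theorem stmt4_general [Fintype V] (G : SimpleGraph V) (hconn : G.Connected)
    (hblock : ∀ B : Set V, IsBlock G B → ∀ u ∈ B, ∀ v ∈ B, u ≠ v → G.Adj u v)
    (hnc : ∃ u v : V, u ≠ v ∧ ¬ G.Adj u v) :
    coverNumber G = 2 := by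
  obtain ⟨u, v, huv, hnadj⟩ := hnc
  obtain ⟨a, c, b, hac, hcb, hab, hne⟩ := (hconn u v).some.exists_adj_adj_not_adj huv hnadj
  exact coverNumber_eq_two_of_adj_adj_not_adj hblock hac hcb hab hne

theorem stmt4 [Fintype V] (G : SimpleGraph V) (hconn : G.Connected)
    (hn : 2 ≤ Fintype.card V)
    (hblock : ∀ B : Set V, IsBlock G B → ∀ u ∈ B, ∀ v ∈ B, u ≠ v → G.Adj u v)
    (hnc : ∃ u v : V, u ≠ v ∧ ¬ G.Adj u v) :
    coverNumber G = 2 :=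
  stmt4_general G hconn hblock hnc
end

section
/- Let G and H be connected non-trivial graphs and let x be a Δ-extreme vertex of G (x belongs to no triangle). Then {x} × V(H) and (V(G)\{x}) × V(H) are both Δ-convex in G □ H; hence φ_c(G □ H) = Θ_c(G □ H) = 2. -/
variable {V : Type*}

variable {α β : Type*}

open SimpleGraph

section DeltaConvex

variable {α β : Type*} {G : SimpleGraph α}

lemma deltaConvex_singleton (G : SimpleGraph α) (x : α) : DeltaConvex G {x} := by
  rintro u v w rfl rfl huv
  exact (G.irrefl huv).elim

lemma DeltaExtreme.deltaConvex_compl_singleton {x : α} (hx : DeltaExtreme G x) :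
    DeltaConvex G {x}ᶜ := by
  rintro u v w - - huv hwu hwv rfl
  exact hx u v ⟨hwu, hwv, huv⟩

/-- A triangle of `G □ H` lies in a single `G`-layer or a single `H`-fiber, so the
`G`-coordinate only ever meets triangles of `G`. -/
lemma DeltaConvex.prod_univ {S : Set α} (hS : DeltaConvex G S) (H : SimpleGraph β) :
    DeltaConvex (G □ H) (S ×ˢ Set.univ) := by
  rintro ⟨a, b⟩ ⟨a', b'⟩ ⟨c, d⟩ ⟨ha, -⟩ ⟨ha', -⟩ huv hwu hwv
  refine ⟨?_, Set.mem_univ d⟩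
  simp only [boxProd_adj] at huv hwu hwv
  rcases hwu with ⟨hca, rfl⟩ | ⟨-, rfl⟩
  · rcases hwv with ⟨hca', rfl⟩ | ⟨-, rfl⟩
    · rcases huv with ⟨haa', -⟩ | ⟨hbb, -⟩
      · exact hS ha ha' haa' hca hca'
      · exact (H.irrefl hbb).elim
    · exact ha'
  · exact ha

lemma IsDeltaPartition.isDeltaCover {p : ℕ} {F : Fin p → Set α}
    (hF : IsDeltaPartition G F) : IsDeltaCover G F := by
  refine ⟨hF.1, hF.2.1, fun i hsub => ?_⟩
  obtain ⟨v, hv⟩ := hF.2.2.1 i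
  obtain ⟨j, hji, hvj⟩ := Set.mem_iUnion₂.mp (hsub hv)
  exact Set.disjoint_left.mp (hF.2.2.2 i j (Ne.symm hji)) hv hvj

lemma isDeltaPartition_pair {S : Set α} (hS : DeltaConvex G S) (hSc : DeltaConvex G Sᶜ)
    (hne : S.Nonempty) (hne' : Sᶜ.Nonempty) : IsDeltaPartition G ![S, Sᶜ] := by
  refine ⟨Fin.forall_fin_two.mpr ⟨hS, hSc⟩, ?_, Fin.forall_fin_two.mpr ⟨hne, hne'⟩, ?_⟩
  · exact Set.iUnion_eq_univ_iff.mpr fun v => Fin.exists_fin_two.mpr (em (v ∈ S))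
  · simp [Fin.forall_fin_two, disjoint_compl_right, disjoint_compl_left]

lemma coverNumber_eq_two {F : Fin 2 → Set α} (hF : IsDeltaCover G F) : coverNumber G = 2 :=
  le_antisymm (Nat.sInf_le ⟨le_rfl, F, hF⟩) (le_csInf ⟨2, le_rfl, F, hF⟩ fun _ hp => hp.1)

lemma partitionNumber_eq_two {F : Fin 2 → Set α} (hF : IsDeltaPartition G F) :
    partitionNumber G = 2 :=
  le_antisymm (Nat.sInf_le ⟨le_rfl, F, hF⟩) (le_csInf ⟨2, le_rfl, F, hF⟩ fun _ hp => hp.1)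

end DeltaConvex

theorem stmt14_general (G : SimpleGraph α) (H : SimpleGraph β)
    (hGnt : Nontrivial α) (hHnt : Nontrivial β)
    (x : α) (hx : DeltaExtreme G x) :
    DeltaConvex (G.boxProd H) (({x} : Set α) ×ˢ (Set.univ : Set β)) ∧
      DeltaConvex (G.boxProd H) ((({x} : Set α)ᶜ) ×ˢ (Set.univ : Set β)) ∧
      coverNumber (G.boxProd H) = 2 ∧ partitionNumber (G.boxProd H) = 2 := by
  obtain ⟨y⟩ := hHnt.to_nonempty
  obtain ⟨x', hx'⟩ := exists_ne x
  have hfiber := (deltaConvex_singleton G x).prod_univ H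
  have hrest := hx.deltaConvex_compl_singleton.prod_univ H
  have hcompl : (({x} : Set α) ×ˢ (Set.univ : Set β))ᶜ = ({x}ᶜ : Set α) ×ˢ Set.univ := by
    simp only [Set.prod_univ, Set.preimage_compl]
  have hpart := isDeltaPartition_pair hfiber (hcompl ▸ hrest) ⟨(x, y), rfl, trivial⟩
    (hcompl ▸ ⟨(x', y), hx', trivial⟩)
  exact ⟨hfiber, hrest, coverNumber_eq_two hpart.isDeltaCover, partitionNumber_eq_two hpart⟩

theorem stmt14 [Fintype α] [Fintype β] (G : SimpleGraph α) (H : SimpleGraph β)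
    (hG : G.Connected) (hH : H.Connected) (hGnt : Nontrivial α) (hHnt : Nontrivial β)
    (x : α) (hx : DeltaExtreme G x) :
    DeltaConvex (G.boxProd H) (({x} : Set α) ×ˢ (Set.univ : Set β)) ∧
      DeltaConvex (G.boxProd H) ((({x} : Set α)ᶜ) ×ˢ (Set.univ : Set β)) ∧
      coverNumber (G.boxProd H) = 2 ∧ partitionNumber (G.boxProd H) = 2 :=
  stmt14_general G H hGnt hHnt x hx
end
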